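/- arXiv:2409.18510 — 2 statements merged into one kernel-verified Lean document; each statement's English description precedes it below -/
import Mathlib

section
/- Let m ≥ 3 and n ≥ 6 with n ≡ 0 (mod 6) and m ≡ 0 (mod 3). Then the 2-rainbow domination number of the Cartesian product of cycles satisfies γ_{r2}(C_m □ C_n) = (m/3)·n. -/
/-!
Lower bound: summing, over all vertices `v`, the inequality
`k ≤ ∑_{u ∼ v} |f u| + k |f v|` (a vertex with empty label must see all `k` colours) gives
`k |V| ≤ (Δ + k) w(f)`; for `C_m □ C_n` we have `Δ = 4` and `k = 2`, so `w(f) ≥ mn / 3`.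

Upper bound: give the vertex `(i, j)` the colour `j mod 2` when `j ≡ i (mod 3)`, and nothing
otherwise. This is well defined around both cycles because `3 ∣ m` and `6 ∣ n`, every row
carries `n / 3` labels, and an unlabelled vertex has `j ≡ i ± 1 (mod 3)`, so it has one labelled
neighbour in its row and one in its column, whose colours differ because their second
coordinates differ by one.
-/

open SimpleGraph Finset

/-- `f` is a `k`-rainbow dominating function of `G`: every vertex with empty label
sees all `k` colors in its open neighborhood. -/
def IsRainbowDominating {V : Type*} (G : SimpleGraph V) (k : ℕ)
    (f : V → Finset (Fin k)) : Prop :=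
  ∀ v, f v = ∅ → ∀ c : Fin k, ∃ u, G.Adj v u ∧ c ∈ f u

/-- The `k`-rainbow domination number: the minimum weight of a `k`-rainbow
dominating function. -/
noncomputable def rainbowDomNum {V : Type*} [Fintype V] (G : SimpleGraph V) (k : ℕ) : ℕ :=
  sInf {w | ∃ f : V → Finset (Fin k), IsRainbowDominating G k f ∧ w = ∑ v, (f v).card}

namespace SimpleGraph

theorem sum_sum_neighborFinset {V M : Type*} [Fintype V] [AddCommMonoid M]
    (G : SimpleGraph V) [G.LocallyFinite] (g : V → M) :
    ∑ v, ∑ u ∈ G.neighborFinset v, g u = ∑ u, G.degree u • g u := by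
  rw [sum_comm' (t' := univ) (s' := fun u => G.neighborFinset u) (by simp [adj_comm])]
  simp_rw [sum_const, card_neighborFinset_eq_degree]

theorem cycleGraph_degree_le_two {N : ℕ} (v : Fin N) : (cycleGraph N).degree v ≤ 2 := by
  match N, v with
  | 1, v => simp [cycleGraph_one_eq_bot]
  | N + 2, v => rw [cycleGraph_degree_two_le]; exact card_le_two

theorem cycleGraph_adj_add_one {N : ℕ} [NeZero N] (hN : N ≠ 1) (j : Fin N) :
    (cycleGraph N).Adj j (j + 1) := by
  obtain ⟨N, rfl⟩ : ∃ N', N = N' + 2 := ⟨N - 2, by have := NeZero.ne N; omega⟩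
  simp [cycleGraph_adj]

theorem cycleGraph_adj_sub_one {N : ℕ} [NeZero N] (hN : N ≠ 1) (j : Fin N) :
    (cycleGraph N).Adj j (j - 1) := by
  simpa using (cycleGraph_adj_add_one hN (j - 1)).symm

end SimpleGraph

namespace Fin

theorem val_add_one_modEq {N d : ℕ} [NeZero N] (hd : d ∣ N) (j : Fin N) :
    (j + 1).val ≡ j.val + 1 [MOD d] := by
  rw [val_add, val_one']
  exact ((Nat.mod_modEq _ N).of_dvd hd).trans (((Nat.mod_modEq 1 N).of_dvd hd).add_left _)

theorem val_sub_one_add_one_modEq {N d : ℕ} [NeZero N] (hd : d ∣ N) (j : Fin N) :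
    (j - 1).val + 1 ≡ j.val [MOD d] := by
  simpa using (val_add_one_modEq hd (j - 1)).symm

theorem card_filter_val_modEq {n d : ℕ} (hd : d ∣ n) (a : ℕ) :
    #{j : Fin n | j.val ≡ a [MOD d]} = n / d := by
  rcases Nat.eq_zero_or_pos d with rfl | hd0
  · obtain rfl := Nat.eq_zero_of_zero_dvd hd
    simp
  rw [card_filter, sum_univ_eq_sum_range (fun j => if j ≡ a [MOD d] then 1 else 0),
    ← card_filter, ← Nat.count_eq_card_filter_range, Nat.count_modEq_card n hd0,
    Nat.mod_eq_zero_of_dvd hd]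
  simp

end Fin

namespace IsRainbowDominating

variable {V : Type*} {G : SimpleGraph V} [G.LocallyFinite] {k : ℕ} {f : V → Finset (Fin k)}

theorem le_sum_card_neighborFinset (hf : IsRainbowDominating G k f) {v : V} (hv : f v = ∅) :
    k ≤ ∑ u ∈ G.neighborFinset v, #(f u) :=
  calc k = #(univ : Finset (Fin k)) := (card_fin k).symm
    _ ≤ #((G.neighborFinset v).biUnion f) := card_le_card fun c _ => by
        obtain ⟨u, hvu, hc⟩ := hf v hv c
        exact mem_biUnion.2 ⟨u, (mem_neighborFinset G v u).2 hvu, hc⟩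
    _ ≤ _ := card_biUnion_le

theorem mul_card_le [Fintype V] {Δ : ℕ} (hΔ : ∀ v, G.degree v ≤ Δ)
    (hf : IsRainbowDominating G k f) :
    k * Fintype.card V ≤ (Δ + k) * ∑ v, #(f v) := by
  have local_bound : ∀ v, k ≤ ∑ u ∈ G.neighborFinset v, #(f u) + k * #(f v) := fun v => by
    by_cases h : f v = ∅
    · exact (hf.le_sum_card_neighborFinset h).trans (Nat.le_add_right _ _)
    · exact (Nat.le_mul_of_pos_right k (card_pos.2 (nonempty_iff_ne_empty.2 h))).trans
        (Nat.le_add_left _ _)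
  calc k * Fintype.card V = ∑ _v : V, k := by rw [sum_const, card_univ, smul_eq_mul, mul_comm]
    _ ≤ ∑ v, (∑ u ∈ G.neighborFinset v, #(f u) + k * #(f v)) :=
        sum_le_sum fun v _ => local_bound v
    _ = ∑ u, G.degree u * #(f u) + k * ∑ v, #(f v) := by
        rw [sum_add_distrib, G.sum_sum_neighborFinset, mul_sum]
        rfl
    _ ≤ ∑ u, Δ * #(f u) + k * ∑ v, #(f v) := by gcongr with u; exact hΔ u
    _ = (Δ + k) * ∑ v, #(f v) := by rw [← mul_sum, add_mul]

theorem mul_le_three_mul_sum_card {m n : ℕ} {f : Fin m × Fin n → Finset (Fin 2)}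
    (hf : IsRainbowDominating (cycleGraph m □ cycleGraph n) 2 f) :
    m * n ≤ 3 * ∑ v, #(f v) := by
  have h := hf.mul_card_le (Δ := 4) fun v => by
    rw [degree_boxProd]
    linarith [cycleGraph_degree_le_two v.1, cycleGraph_degree_le_two v.2]
  rw [Fintype.card_prod, Fintype.card_fin, Fintype.card_fin] at h
  omega

end IsRainbowDominating

/-- Equivalently: `{0}` where `2 i + j ≡ 0 (mod 6)`, `{1}` where `2 i + j ≡ 3 (mod 6)`. -/
def diagonalLabelling (m n : ℕ) (v : Fin m × Fin n) : Finset (Fin 2) :=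
  if v.2.val ≡ v.1.val [MOD 3] then {Fin.ofNat 2 v.2.val} else ∅

theorem card_diagonalLabelling (m n : ℕ) (v : Fin m × Fin n) :
    #(diagonalLabelling m n v) = if v.2.val ≡ v.1.val [MOD 3] then 1 else 0 := by
  unfold diagonalLabelling
  split_ifs <;> rfl

theorem sum_card_diagonalLabelling {m n : ℕ} (hm : 3 ∣ m) (hn : 3 ∣ n) :
    ∑ v, #(diagonalLabelling m n v) = m / 3 * n := by
  simp_rw [card_diagonalLabelling, Fintype.sum_prod_type, ← card_filter,
    Fin.card_filter_val_modEq hn, sum_const, card_univ, Fintype.card_fin, smul_eq_mul]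
  obtain ⟨a, rfl⟩ := hm
  obtain ⟨b, rfl⟩ := hn
  simp only [Nat.mul_div_cancel_left _ three_pos]
  ring

theorem isRainbowDominating_diagonalLabelling {m n : ℕ} (hm : 3 ∣ m) (hn : 6 ∣ n) :
    IsRainbowDominating (cycleGraph m □ cycleGraph n) 2 (diagonalLabelling m n) := by
  rintro ⟨i, j⟩ hv c
  have : NeZero m := NeZero.of_pos i.pos
  have : NeZero n := NeZero.of_pos j.pos
  have hm1 : m ≠ 1 := by omega
  have hn1 : n ≠ 1 := by omega
  have h2n : 2 ∣ n := (by norm_num : 2 ∣ 6).trans hn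
  have h3n : 3 ∣ n := (by norm_num : 3 ∣ 6).trans hn
  have label : ∀ (a : Fin m) (b : Fin n), b.val ≡ a.val [MOD 3] →
      Fin.ofNat 2 b.val ∈ diagonalLabelling m n (a, b) := fun a b hab => by
    simp [diagonalLabelling, hab]
  have hij : ¬ j.val ≡ i.val [MOD 3] := by simpa [diagonalLabelling] using hv
  have colour : ∀ a b : ℕ, a % 2 ≠ b % 2 → c = Fin.ofNat 2 a ∨ c = Fin.ofNat 2 b := by
    intro a b hab
    have := c.isLt
    simp only [Fin.ext_iff, Fin.val_ofNat]
    omega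
  have hi_add := Fin.val_add_one_modEq hm i
  have hi_sub := Fin.val_sub_one_add_one_modEq hm i
  have hj_add := Fin.val_add_one_modEq h3n j
  have hj_sub := Fin.val_sub_one_add_one_modEq h3n j
  have hj_add₂ := Fin.val_add_one_modEq h2n j
  have hj_sub₂ := Fin.val_sub_one_add_one_modEq h2n j
  simp only [Nat.ModEq] at *
  rcases (by omega : j.val % 3 = (i.val + 1) % 3 ∨ i.val % 3 = (j.val + 1) % 3) with h | h
  · rcases colour j (j - 1 : Fin n) (by omega) with rfl | rfl
    · exact ⟨(i + 1, j), .inl ⟨cycleGraph_adj_add_one hm1 i, rfl⟩, label _ _ (by omega)⟩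
    · exact ⟨(i, j - 1), .inr ⟨cycleGraph_adj_sub_one hn1 j, rfl⟩, label _ _ (by omega)⟩
  · rcases colour j (j + 1 : Fin n) (by omega) with rfl | rfl
    · exact ⟨(i - 1, j), .inl ⟨cycleGraph_adj_sub_one hm1 i, rfl⟩, label _ _ (by omega)⟩
    · exact ⟨(i, j + 1), .inr ⟨cycleGraph_adj_add_one hn1 j, rfl⟩, label _ _ (by omega)⟩

theorem two_rainbow_dom_cycles_mod0_general (m n : ℕ)
    (hn6 : n % 6 = 0) (hm3 : m % 3 = 0) :
    rainbowDomNum (cycleGraph m □ cycleGraph n) 2 = (m / 3) * n := by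
  have hm : 3 ∣ m := Nat.dvd_of_mod_eq_zero hm3
  have hn : 6 ∣ n := Nat.dvd_of_mod_eq_zero hn6
  have weight := sum_card_diagonalLabelling hm ((by norm_num : 3 ∣ 6).trans hn)
  refine IsLeast.csInf_eq ⟨⟨_, isRainbowDominating_diagonalLabelling hm hn, weight.symm⟩, ?_⟩
  rintro _ ⟨f, hf, rfl⟩
  have h := hf.mul_le_three_mul_sum_card
  obtain ⟨a, rfl⟩ := hm
  rw [Nat.mul_div_cancel_left _ three_pos]
  linarith

theorem two_rainbow_dom_cycles_mod0 (m n : ℕ) (hm : 3 ≤ m) (hn : 6 ≤ n)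
    (hn6 : n % 6 = 0) (hm3 : m % 3 = 0) :
    rainbowDomNum (cycleGraph m □ cycleGraph n) 2 = (m / 3) * n :=
  two_rainbow_dom_cycles_mod0_general m n hn6 hm3
end

section
/- Let m ≥ 3 and n ≥ 6 with n ≡ 0 (mod 6) and m ≡ 2 (mod 3). Then γ_{r2}(C_m □ C_n) = ((m+1)/3)·n. -/
open SimpleGraph Finset

theorem rainbowDomNum_eq_of_forall_le {V : Type*} [Fintype V] {G : SimpleGraph V} {k w : ℕ}
    (f : V → Finset (Fin k)) (hf : IsRainbowDominating G k f) (hfw : ∑ v, (f v).card = w)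
    (hle : ∀ g, IsRainbowDominating G k g → w ≤ ∑ v, (g v).card) :
    rainbowDomNum G k = w :=
  le_antisymm (Nat.sInf_le ⟨f, hf, hfw.symm⟩)
    (le_csInf ⟨w, f, hf, hfw.symm⟩ fun _ ⟨g, hg, hw⟩ => hw ▸ hle g hg)

theorem IsRainbowDominating.le_mul_card_add_sum {V ι : Type*} [Fintype ι] {G : SimpleGraph V}
    {k : ℕ} {f : V → Finset (Fin k)} (hf : IsRainbowDominating G k f) (v : V) (u : ι → V)
    (hu : ∀ x, G.Adj v x → ∃ i, u i = x) :
    k ≤ k * (f v).card + ∑ i, (f (u i)).card := by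
  by_cases hv : f v = ∅
  · have hcover : (univ : Finset (Fin k)) ⊆ univ.biUnion (fun i => f (u i)) := by
      intro c _
      obtain ⟨x, hx, hc⟩ := hf v hv c
      obtain ⟨i, rfl⟩ := hu x hx
      exact mem_biUnion.2 ⟨i, mem_univ _, hc⟩
    have := (card_le_card hcover).trans card_biUnion_le
    rw [card_univ, Fintype.card_fin] at this
    omega
  · have : 1 ≤ (f v).card := card_pos.2 (nonempty_iff_ne_empty.2 hv)
    exact le_add_right (Nat.le_mul_of_pos_right k this)

theorem sum_nonneg_of_stencil_ge_neg_two {G : Type*} [AddGroup G] [Fintype G] (z : G → ℤ) (g : G)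
    (hz : ∀ t, -2 ≤ z (t - g) + 4 * z t + z (t + g)) : 0 ≤ ∑ t, z t := by
  have hdischarge : ∀ t, 2 * max (-z t) 0 ≤ max (z (t - g)) 0 + max (z (t + g)) 0 := by
    intro t; have := hz t; omega
  have hshift_sub : ∑ t, max (z (t - g)) 0 = ∑ t, max (z t) 0 :=
    Equiv.sum_comp (Equiv.subRight g) (fun t => max (z t) 0)
  have hshift_add : ∑ t, max (z (t + g)) 0 = ∑ t, max (z t) 0 :=
    Equiv.sum_comp (Equiv.addRight g) (fun t => max (z t) 0)
  have hsum := sum_le_sum fun t (_ : t ∈ univ) => hdischarge t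
  rw [← mul_sum, sum_add_distrib, hshift_sub, hshift_add] at hsum
  have hsplit : ∑ t, z t = ∑ t, max (z t) 0 - ∑ t, max (-z t) 0 := by
    rw [← sum_sub_distrib]; exact sum_congr rfl fun t _ => by omega
  linarith

theorem cycleGraph_adj_eq_sub_one_or_add_one {m : ℕ} [NeZero m] {a b : Fin m}
    (h : (cycleGraph m).Adj a b) : b = a - 1 ∨ b = a + 1 := by
  rcases m with _ | _ | m
  · exact a.elim0
  · exact (cycleGraph_one_adj h).elim
  · simpa [← mem_neighborSet, cycleGraph_neighborSet] using h

-- The values of `a + 1` and `a - 1` are spelled out with their wrap-around, so that callers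
-- can discharge `h` by `split_ifs` and `omega`.
theorem exists_cycleGraph_adj_val {m : ℕ} (hm : 2 ≤ m) (a : Fin m) (P : ℕ → Prop)
    (h : P (if a.val + 1 = m then 0 else a.val + 1) ∨ P (if a.val = 0 then m - 1 else a.val - 1)) :
    ∃ b, (cycleGraph m).Adj a b ∧ P b.val := by
  obtain ⟨m, rfl⟩ : ∃ m', m = m' + 2 := ⟨m - 2, by omega⟩
  have hadj : ∀ b ∈ ({a - 1, a + 1} : Set (Fin (m + 2))), (cycleGraph (m + 2)).Adj a b := by
    intro b hb; rwa [← cycleGraph_neighborSet, mem_neighborSet] at hb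
  rcases h with h | h
  · refine ⟨a + 1, hadj _ (by simp), ?_⟩
    have hval : (a + 1).val = if a.val + 1 = m + 2 then 0 else a.val + 1 := by
      rw [Fin.val_add_one]; simp only [Fin.ext_iff, Fin.val_last]; split_ifs <;> omega
    rwa [hval]
  · refine ⟨a - 1, hadj _ (by simp), ?_⟩
    have hval : (a - 1).val = if a.val = 0 then m + 2 - 1 else a.val - 1 := by
      rw [Fin.coe_sub_one]; simp only [Fin.ext_iff, Fin.val_zero]; split_ifs <;> omega
    rwa [hval]

theorem two_mul_le_column_stencil {m n : ℕ} [NeZero m] [NeZero n]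
    {f : Fin m × Fin n → Finset (Fin 2)}
    (hf : IsRainbowDominating (cycleGraph m □ cycleGraph n) 2 f) (j : Fin n) :
    2 * m ≤ ∑ i, (f (i, j - 1)).card + 4 * ∑ i, (f (i, j)).card + ∑ i, (f (i, j + 1)).card := by
  have hvertex : ∀ i, 2 ≤ 2 * (f (i, j)).card + ((f (i - 1, j)).card + (f (i + 1, j)).card
      + (f (i, j - 1)).card + (f (i, j + 1)).card) := by
    intro i
    have hcover : ∀ x, (cycleGraph m □ cycleGraph n).Adj (i, j) x →
        ∃ t, ![(i - 1, j), (i + 1, j), (i, j - 1), (i, j + 1)] t = x := by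
      rintro ⟨a, b⟩ hadj
      rcases boxProd_adj.1 hadj with ⟨ha, rfl⟩ | ⟨hb, rfl⟩
      · rcases cycleGraph_adj_eq_sub_one_or_add_one ha with rfl | rfl
        exacts [⟨0, rfl⟩, ⟨1, rfl⟩]
      · rcases cycleGraph_adj_eq_sub_one_or_add_one hb with rfl | rfl
        exacts [⟨2, rfl⟩, ⟨3, rfl⟩]
    simpa [Fin.sum_univ_four] using hf.le_mul_card_add_sum (i, j) _ hcover
  have hsub : ∑ i, (f (i - 1, j)).card = ∑ i, (f (i, j)).card :=
    Equiv.sum_comp (Equiv.subRight 1) fun i => (f (i, j)).card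
  have hadd : ∑ i, (f (i + 1, j)).card = ∑ i, (f (i, j)).card :=
    Equiv.sum_comp (Equiv.addRight 1) fun i => (f (i, j)).card
  have hsum := sum_le_sum fun i (_ : i ∈ univ) => hvertex i
  simp only [sum_const, card_univ, Fintype.card_fin, smul_eq_mul, sum_add_distrib, ← mul_sum,
    hsub, hadd] at hsum
  omega

theorem mul_le_sum_card_of_isRainbowDominating {k n : ℕ}
    {f : Fin (3 * k + 2) × Fin n → Finset (Fin 2)}
    (hf : IsRainbowDominating (cycleGraph (3 * k + 2) □ cycleGraph n) 2 f) :
    (k + 1) * n ≤ ∑ v, (f v).card := by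
  rcases Nat.eq_zero_or_pos n with rfl | hn
  · simp
  have : NeZero n := ⟨hn.ne'⟩
  set w : Fin n → ℕ := fun j => ∑ i, (f (i, j)).card with hw
  have hexcess := sum_nonneg_of_stencil_ge_neg_two (fun j => (w j : ℤ) - (k + 1)) 1 fun j => by
    have := two_mul_le_column_stencil hf j
    simp only [hw]
    omega
  rw [sum_sub_distrib, sum_const, card_univ, Fintype.card_fin, ← Nat.cast_sum] at hexcess
  rw [Fintype.sum_prod_type_right]
  simp only [nsmul_eq_mul] at hexcess
  have : ((k + 1) * n : ℤ) ≤ ∑ j, w j := by linarith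
  exact_mod_cast this

theorem isRainbowDominating_boxProd_of_coloring {V W : Type*} {G : SimpleGraph V}
    {H : SimpleGraph W} (C : H.Coloring (Fin 2)) (P : V × W → Prop) [DecidablePred P]
    (hG : ∀ v, ¬P v → ∃ a, G.Adj v.1 a ∧ P (a, v.2))
    (hH : ∀ v, ¬P v → ∃ b, H.Adj v.2 b ∧ P (v.1, b)) :
    IsRainbowDominating (G □ H) 2 (fun v => if P v then {C v.2} else ∅) := by
  intro v hv c
  have hPv : ¬P v := fun h => by simp [h] at hv
  obtain ⟨a, hGa, hPa⟩ := hG v hPv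
  obtain ⟨b, hHb, hPb⟩ := hH v hPv
  have hc : c = C v.2 ∨ c = C b := by
    have := C.valid hHb
    omega
  rcases hc with rfl | rfl
  · exact ⟨(a, v.2), boxProd_adj.2 (.inl ⟨hGa, rfl⟩), by simp [hPa]⟩
  · exact ⟨(v.1, b), boxProd_adj.2 (.inr ⟨hHb, rfl⟩), by simp [hPb]⟩

theorem sum_card_ite_singleton {V α : Type*} [Fintype V] (P : V → Prop) [DecidablePred P]
    (c : V → α) : ∑ v, (if P v then {c v} else ∅ : Finset α).card = #{v | P v} := by
  rw [card_filter]
  exact sum_congr rfl fun v _ => by split_ifs <;> simp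

def IsMarked (k a b : ℕ) : Prop :=
  (a < 3 * k ∧ a % 3 = b % 3) ∨ (a = 3 * k ∧ b % 3 ≠ 2) ∨ (a = 3 * k + 1 ∧ b % 3 = 2)

instance (k a b : ℕ) : Decidable (IsMarked k a b) := by unfold IsMarked; infer_instance

theorem card_filter_isMarked (k b : ℕ) : #{a : Fin (3 * k + 2) | IsMarked k a b} = k + 1 := by
  rw [← card_range (k + 1)]
  refine card_bij (fun a _ => a.val / 3) ?_ ?_ ?_
  · intro a ha
    rw [mem_filter_univ, IsMarked] at ha
    rw [mem_range]
    omega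
  · intro a₁ h₁ a₂ h₂ h
    rw [mem_filter_univ, IsMarked] at h₁ h₂
    ext
    omega
  · intro q hq
    rw [mem_range] at hq
    refine ⟨⟨min (3 * q + b % 3) (3 * k + b % 3 / 2), by omega⟩, ?_, ?_⟩
    · rw [mem_filter_univ, IsMarked, Fin.val_mk]
      omega
    · simp only
      omega

theorem card_filter_isMarked_prod (k n : ℕ) :
    #{v : Fin (3 * k + 2) × Fin n | IsMarked k v.1 v.2} = (k + 1) * n := by
  rw [card_filter, Fintype.sum_prod_type_right]
  simp_rw [← card_filter, card_filter_isMarked]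
  simp [mul_comm]

theorem exists_cycleGraph_adj_isMarked_fst {k b : ℕ} (a : Fin (3 * k + 2))
    (ha : ¬IsMarked k a b) : ∃ a', (cycleGraph (3 * k + 2)).Adj a a' ∧ IsMarked k a' b := by
  have := a.isLt
  refine exists_cycleGraph_adj_val (by omega) a (IsMarked k · b) ?_
  simp only [IsMarked] at ha ⊢
  split_ifs <;> omega

theorem exists_cycleGraph_adj_isMarked_snd {k a n : ℕ} (hn : n % 3 = 0) (b : Fin n)
    (ha : a < 3 * k + 2) (hb : ¬IsMarked k a b) :
    ∃ b', (cycleGraph n).Adj b b' ∧ IsMarked k a b' := by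
  have := b.isLt
  refine exists_cycleGraph_adj_val (by omega) b (IsMarked k a ·) ?_
  simp only [IsMarked] at hb ⊢
  split_ifs <;> omega

theorem two_rainbow_dom_cycles_mod2_general (m n : ℕ)
    (hn6 : n % 6 = 0) (hm3 : m % 3 = 2) :
    rainbowDomNum (cycleGraph m □ cycleGraph n) 2 = ((m + 1) / 3) * n := by
  obtain ⟨k, rfl⟩ : ∃ k, m = 3 * k + 2 := ⟨m / 3, by omega⟩
  rw [show (3 * k + 2 + 1) / 3 = k + 1 by omega]
  let C : (cycleGraph n).Coloring (Fin 2) := recolorOfEquiv _ finTwoEquiv.symm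
    (cycleGraph.bicoloring_of_even n (Nat.even_iff.2 (by omega)))
  let P : Fin (3 * k + 2) × Fin n → Prop := fun v => IsMarked k v.1 v.2
  have hdom := isRainbowDominating_boxProd_of_coloring C P
    (fun v hv => exists_cycleGraph_adj_isMarked_fst v.1 hv)
    (fun v hv => exists_cycleGraph_adj_isMarked_snd (by omega) v.2 v.1.isLt hv)
  refine rainbowDomNum_eq_of_forall_le _ hdom ?_ fun g hg =>
    mul_le_sum_card_of_isRainbowDominating hg
  rw [sum_card_ite_singleton, card_filter_isMarked_prod]

theorem two_rainbow_dom_cycles_mod2 (m n : ℕ) (hm : 3 ≤ m) (hn : 6 ≤ n)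
    (hn6 : n % 6 = 0) (hm3 : m % 3 = 2) :
    rainbowDomNum (cycleGraph m □ cycleGraph n) 2 = ((m + 1) / 3) * n :=
  two_rainbow_dom_cycles_mod2_general m n hn6 hm3
end
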